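/- Let T = (T_1,...,T_k) be a tuple of commuting families of operators in B(H), and let M ⊆ H be an invariant subspace for all entries T_{i,j}. If (id − Φ_{T_1})^{p_1} ∘ ··· ∘ (id − Φ_{T_k})^{p_k}(P_M) restricted to M is positive for all p_i ∈ {0,1}, then (id − Φ_{T_1})^{p_1} ∘ ··· ∘ (id − Φ_{T_k})^{p_k}(P_M) is positive on all of H for all p_i ∈ {0,1}. -/

import Mathlib

open Filter

/-- The completely positive map Φ_{T_i}(Y) = Σ_j T_{i,j} Y T_{i,j}*. -/
noncomputable def PhiMap {H : Type*} [NormedAddCommGroup H] [InnerProductSpace ℂ H]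
    [CompleteSpace H] {k : ℕ} {n : Fin k → ℕ}
    (T : (i : Fin k) → Fin (n i) → (H →L[ℂ] H)) (i : Fin k) (Y : H →L[ℂ] H) : H →L[ℂ] H :=
  ∑ a, (T i a) ∘L Y ∘L (ContinuousLinearMap.adjoint (T i a))

/-- The defect map `(id − Φ_{T_1})^{p_1} ∘ ⋯ ∘ (id − Φ_{T_k})^{p_k}`. -/
noncomputable def DMap {H : Type*} [NormedAddCommGroup H] [InnerProductSpace ℂ H]
    [CompleteSpace H] {k : ℕ} {n : Fin k → ℕ}
    (T : (i : Fin k) → Fin (n i) → (H →L[ℂ] H)) (p : Fin k → ℕ) :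
    (H →L[ℂ] H) → (H →L[ℂ] H) :=
  (List.finRange k).foldr (fun i f => (fun Y => Y - PhiMap T i Y)^[p i] ∘ f) id

lemma phi_pres {H : Type*} [NormedAddCommGroup H] [InnerProductSpace ℂ H] [CompleteSpace H]
    {k : ℕ} {n : Fin k → ℕ} (T : (i : Fin k) → Fin (n i) → (H →L[ℂ] H))
    (P : H →L[ℂ] H) (hsa : star P = P) (hTP : ∀ i a, T i a * P = P * (T i a) * P)
    (i : Fin k) (Y : H →L[ℂ] H) (hY : P * Y * P = Y) :
    P * PhiMap T i Y * P = PhiMap T i Y := by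
  have hPT : ∀ a, P * star (T i a) * P = P * star (T i a) := by
    intro a
    have := congrArg star (hTP i a)
    simpa [star_mul, hsa, mul_assoc] using this.symm
  have hΦ : PhiMap T i Y = ∑ a, T i a * Y * star (T i a) := by
    simp only [PhiMap, ContinuousLinearMap.star_eq_adjoint]
    rfl
  have key : ∀ a, P * (T i a * Y * star (T i a)) * P = T i a * Y * star (T i a) := by
    intro a
    conv_lhs => rw [← hY]
    calc P * (T i a * (P * Y * P) * star (T i a)) * P
        = (P * T i a * P) * Y * (P * star (T i a) * P) := by simp [mul_assoc]
      _ = (T i a * P) * Y * (P * star (T i a)) := by rw [← hTP i a, hPT a]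
      _ = T i a * (P * Y * P) * star (T i a) := by simp [mul_assoc]
      _ = T i a * Y * star (T i a) := by rw [hY]
  rw [hΦ, Finset.mul_sum, Finset.sum_mul]
  exact Finset.sum_congr rfl fun a _ => key a

/-- If M is jointly invariant for a cross-commuting tuple T and the defect operators
(id−Φ_{T_1})^{p_1}∘⋯∘(id−Φ_{T_k})^{p_k}(P_M), p_i ∈ {0,1}, are positive on M, then they are
positive on all of H. -/
theorem stmt15 {H : Type*} [NormedAddCommGroup H] [InnerProductSpace ℂ H] [CompleteSpace H]
    {k : ℕ} {n : Fin k → ℕ} (T : (i : Fin k) → Fin (n i) → (H →L[ℂ] H))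
    (hcomm : ∀ i j, i ≠ j → ∀ (a : Fin (n i)) (b : Fin (n j)), Commute (T i a) (T j b))
    (M : Submodule ℂ H) [CompleteSpace M]
    (hinv : ∀ i (a : Fin (n i)), ∀ x ∈ M, T i a x ∈ M)
    (hPM : ∀ (p : Fin k → ℕ), (∀ i, p i ≤ 1) → ∀ x ∈ M,
      0 ≤ (inner ℂ x ((DMap T p (M.subtypeL ∘L M.orthogonalProjection)) x) : ℂ).re) :
    ∀ (p : Fin k → ℕ), (∀ i, p i ≤ 1) → ∀ x : H,
      0 ≤ (inner ℂ x ((DMap T p (M.subtypeL ∘L M.orthogonalProjection)) x) : ℂ).re := by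
  set P : H →L[ℂ] H := M.subtypeL ∘L M.orthogonalProjection with hPdef
  have hsa : star P = P := isSelfAdjoint_starProjection M
  have hPmem : ∀ x : H, P x ∈ M := fun x => SetLike.coe_mem _
  have hPfix : ∀ x : H, x ∈ M → P x = x := fun x hx =>
    Submodule.starProjection_eq_self_iff.mpr hx
  have hPP : P * P = P := by
    ext x
    exact hPfix _ (hPmem x)
  have hTP : ∀ i a, T i a * P = P * (T i a) * P := by
    intro i a
    ext x
    exact (hPfix _ (hinv i a _ (hPmem x))).symm
  have hstep : ∀ (i : Fin k) (Y : H →L[ℂ] H), P * Y * P = Y →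
      P * (Y - PhiMap T i Y) * P = Y - PhiMap T i Y := by
    intro i Y hY
    rw [mul_sub, sub_mul, hY, phi_pres T P hsa hTP i Y hY]
  have hiter : ∀ (i : Fin k) (m : ℕ) (W : H →L[ℂ] H), P * W * P = W →
      P * ((fun Y => Y - PhiMap T i Y)^[m] W) * P = (fun Y => Y - PhiMap T i Y)^[m] W := by
    intro i m
    induction m with
    | zero => intro W h; simpa using h
    | succ m ihm =>
      intro W h
      rw [Function.iterate_succ_apply]
      exact ihm _ (hstep i W h)
  have hfold : ∀ (l : List (Fin k)) (p : Fin k → ℕ) (Y : H →L[ℂ] H), P * Y * P = Y →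
      P * (l.foldr (fun i f => (fun Y => Y - PhiMap T i Y)^[p i] ∘ f) id Y) * P =
        l.foldr (fun i f => (fun Y => Y - PhiMap T i Y)^[p i] ∘ f) id Y := by
    intro l p
    induction l with
    | nil => intro Y h; simpa using h
    | cons i l ih =>
      intro Y h
      simp only [List.foldr_cons, Function.comp_apply]
      exact hiter i (p i) _ (ih Y h)
  intro p hp x
  have hD : P * DMap T p P * P = DMap T p P :=
    hfold (List.finRange k) p P (by rw [hPP, hPP])
  have hadj : ContinuousLinearMap.adjoint P = P := by
    rw [← ContinuousLinearMap.star_eq_adjoint, hsa]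
  have hx : (inner ℂ x (DMap T p P x) : ℂ) = inner ℂ (P x) (DMap T p P (P x)) := by
    conv_lhs => rw [← hD]
    have : (P * DMap T p P * P) x = P (DMap T p P (P x)) := rfl
    rw [this, ← ContinuousLinearMap.adjoint_inner_left, hadj]
  rw [hx]
  exact hPM p hp (P x) (hPmem x)
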